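/- arXiv:2303.10520 — 4 statements merged into one kernel-verified Lean document; each statement's English description precedes it below -/
import Mathlib

section
/- Let X, Y, Z be locally convex Hausdorff topological vector spaces and F : X ⇒ Y a multifunction whose graph is {(x,y) : A₁(x) + A₂(y) = z, ⟨x_i*, x⟩ + ⟨y_i*, y⟩ ≤ β_i, i = 1,…,m}, where A₁ : X → Z and A₂ : Y → Z are continuous linear maps, z ∈ Z, x_i* ∈ X*, y_i* ∈ Y*, β_i ∈ ℝ. If A₂ maps every finite-codimensional closed linear subspace of Y to a closed subset of Z, then dom F = {x : F(x) ≠ ∅} is a generalized polyhedral convex set in X. -/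
/-!
Let `K = ⋂ᵢ ker yᵢ*`, a closed subspace of finite codimension, so that `Z₀ = A₂ K` is closed.
A vector `w` equals `A₂ y` for some `y` with `yᵢ*(y) ≤ tᵢ` iff the class of `w` in `Z ⧸ Z₀` is
the image of some `ȳ ∈ Y ⧸ K` with `yᵢ*(ȳ) ≤ tᵢ`. Hence the set of such `(w, t) ∈ Z × ℝᵐ` is the
preimage under `Z → Z ⧸ Z₀` of the linear image of a polyhedron of the finite-dimensional space
`(Y ⧸ K) × ℝᵐ`. By Fourier–Motzkin elimination that image is a polyhedron inside a
finite-dimensional subspace of the Hausdorff locally convex space `(Z ⧸ Z₀) × ℝᵐ`, and extending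
its defining functionals by Hahn–Banach shows that it is generalized polyhedral convex. Finally
`dom F` is the preimage of this set under the continuous affine map `x ↦ (z - A₁ x, (βᵢ - xᵢ*(x))ᵢ)`.
-/

/-- A set is generalized polyhedral convex if it is the intersection of a closed
affine subspace with finitely many half-spaces given by continuous linear functionals. -/
def IsGPC {E : Type*} [AddCommGroup E] [Module ℝ E] [TopologicalSpace E]
    (D : Set E) : Prop :=
  ∃ (n : ℕ) (f : Fin n → E →L[ℝ] ℝ) (α : Fin n → ℝ) (L : AffineSubspace ℝ E),
    IsClosed (L : Set E) ∧ D = {x | x ∈ L ∧ ∀ i, f i x ≤ α i}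

theorem LinearMap.finiteDimensional_quotient_ker {K V W : Type*} [DivisionRing K]
    [AddCommGroup V] [Module K V] [AddCommGroup W] [Module K W] [FiniteDimensional K W]
    (f : V →ₗ[K] W) : FiniteDimensional K (V ⧸ LinearMap.ker f) :=
  Module.Finite.equiv f.quotKerEquivRange.symm

instance Submodule.Quotient.locallyConvexSpace {𝕜 E : Type*} [Ring 𝕜] [PartialOrder 𝕜]
    [AddCommGroup E] [Module 𝕜 E] [TopologicalSpace E] [IsTopologicalAddGroup E]
    [LocallyConvexSpace 𝕜 E] (S : Submodule 𝕜 E) : LocallyConvexSpace 𝕜 (E ⧸ S) := by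
  refine (locallyConvexSpace_iff_exists_convex_subset_zero 𝕜 _).2 fun U hU => ?_
  obtain ⟨V, hV, hVconv, hVU⟩ := (locallyConvexSpace_iff_exists_convex_subset_zero 𝕜 E).1
    inferInstance _ (S.isQuotientMap_mkQ.continuous.tendsto 0 hU)
  exact ⟨S.mkQ '' V, map_zero S.mkQ ▸ S.isOpenMap_mkQ.image_mem_nhds hV,
    hVconv.linear_image S.mkQ, Set.image_subset_iff.2 hVU⟩

theorem exists_forall_mul_le_iff {ι : Type*} [Finite ι] (a c : ι → ℝ) :
    (∃ x, ∀ i, a i * x ≤ c i) ↔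
      (∀ i, a i = 0 → 0 ≤ c i) ∧ ∀ i j, 0 < a i → a j < 0 → a j * c i ≤ a i * c j := by
  constructor
  · rintro ⟨x, hx⟩
    refine ⟨fun i hi => by simpa [hi] using hx i, fun i j hi hj => ?_⟩
    nlinarith [hx i, hx j]
  · rintro ⟨hzero, hpair⟩
    set lower := (fun j => c j / a j) '' {j | a j < 0}
    set upper := (fun i => c i / a i) '' {i | 0 < a i}
    have hle : ∀ l ∈ lower, ∀ u ∈ upper, l ≤ u := by
      rintro _ ⟨j, hj, rfl⟩ _ ⟨i, hi, rfl⟩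
      rw [div_le_iff_of_neg hj, div_mul_eq_mul_div, div_le_iff₀ hi]
      linarith [hpair i j hi hj]
    obtain ⟨x, hxl, hxu⟩ : ∃ x, (∀ l ∈ lower, l ≤ x) ∧ ∀ u ∈ upper, x ≤ u := by
      rcases lower.eq_empty_or_nonempty with hempty | hne
      · obtain ⟨x, hx⟩ := (Set.toFinite upper).bddBelow
        exact ⟨x, by simp [hempty], hx⟩
      · exact ⟨sSup lower, fun l hl => le_csSup (Set.toFinite lower).bddAbove hl,
          fun u hu => csSup_le hne fun l hl => hle l hl u hu⟩
    refine ⟨x, fun i => ?_⟩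
    rcases lt_trichotomy (a i) 0 with hi | hi | hi
    · rw [mul_comm, ← div_le_iff_of_neg hi]
      exact hxl _ ⟨i, hi, rfl⟩
    · simpa [hi] using hzero i hi
    · rw [mul_comm, ← le_div_iff₀ hi]
      exact hxu _ ⟨i, hi, rfl⟩

def IsPolyhedral {E : Type*} [AddCommGroup E] [Module ℝ E] (s : Set E) : Prop :=
  ∃ (ι : Type) (_ : Finite ι) (f : ι → E →ₗ[ℝ] ℝ) (b : ι → ℝ), s = {x | ∀ i, f i x ≤ b i}

namespace IsPolyhedral

variable {E F : Type*} [AddCommGroup E] [Module ℝ E] [AddCommGroup F] [Module ℝ F]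

theorem setOf_forall_le {ι : Type*} [Finite ι] (f : ι → E →ₗ[ℝ] ℝ) (b : ι → ℝ) :
    IsPolyhedral {x | ∀ i, f i x ≤ b i} := by
  obtain ⟨n, ⟨e⟩⟩ := Finite.exists_equiv_fin ι
  refine ⟨Fin n, inferInstance, fun k => f (e.symm k), fun k => b (e.symm k), ?_⟩
  ext x
  simp only [Set.mem_ofPred_eq, e.symm.surjective.forall]

theorem inter {s t : Set E} (hs : IsPolyhedral s) (ht : IsPolyhedral t) :
    IsPolyhedral (s ∩ t) := by
  obtain ⟨ι, _, f, b, rfl⟩ := hs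
  obtain ⟨κ, _, g, c, rfl⟩ := ht
  convert setOf_forall_le (Sum.elim f g) (Sum.elim b c) using 1
  ext x
  simp

theorem preimage {s : Set E} (hs : IsPolyhedral s) (L : F →ₗ[ℝ] E) : IsPolyhedral (L ⁻¹' s) := by
  obtain ⟨ι, _, f, b, rfl⟩ := hs
  exact ⟨ι, inferInstance, fun i => (f i).comp L, b, rfl⟩

theorem singleton_zero [FiniteDimensional ℝ E] : IsPolyhedral ({0} : Set E) := by
  let B := Module.finBasis ℝ E
  convert (setOf_forall_le B.coord 0).inter (setOf_forall_le (fun i => -B.coord i) 0) using 1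
  ext x
  simp only [Set.mem_singleton_iff, Set.mem_inter_iff, Set.mem_ofPred_eq, Pi.zero_apply,
    LinearMap.neg_apply, neg_nonpos, ← forall_and, ← le_antisymm_iff, B.forall_coord_eq_zero_iff]

theorem image_snd_real {s : Set (ℝ × F)} (hs : IsPolyhedral s) : IsPolyhedral (Prod.snd '' s) := by
  obtain ⟨ι, _, f, b, rfl⟩ := hs
  set a : ι → ℝ := fun i => f i (1, 0)
  set g : ι → F →ₗ[ℝ] ℝ := fun i => (f i).comp (LinearMap.inr ℝ ℝ F)
  have hf : ∀ i x y, f i (x, y) = a i * x + g i y := fun i x y => by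
    have : ((x, y) : ℝ × F) = x • ((1 : ℝ), (0 : F)) + ((0 : ℝ), y) := by ext <;> simp
    rw [this, map_add, map_smul, smul_eq_mul, mul_comm]
    rfl
  -- Fourier–Motzkin: `y` is in the projection iff the system `a i * x ≤ b i - g i y` is solvable.
  have himage : Prod.snd '' {p | ∀ i, f i p ≤ b i} =
      {y | ∀ i : {i // a i = 0}, g i y ≤ b i} ∩
        {y | ∀ p : {p : ι × ι // 0 < a p.1 ∧ a p.2 < 0},
          (a p.1.1 • g p.1.2 - a p.1.2 • g p.1.1) y ≤ a p.1.1 * b p.1.2 - a p.1.2 * b p.1.1} := by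
    ext y
    have hsolv := exists_forall_mul_le_iff a (fun i => b i - g i y)
    simp only [Set.mem_image, Set.mem_ofPred_eq, Prod.exists, exists_eq_right,
      hf, ← le_sub_iff_add_le] at hsolv ⊢
    rw [hsolv]
    simp only [Set.mem_inter_iff, Set.mem_ofPred_eq, sub_nonneg, Subtype.forall, Prod.forall,
      and_imp, LinearMap.sub_apply, LinearMap.smul_apply, smul_eq_mul]
    refine and_congr Iff.rfl (forall₄_congr fun i j hi hj => ?_)
    constructor <;> intro h <;> linarith
  rw [himage]
  exact (setOf_forall_le _ _).inter (setOf_forall_le _ _)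

theorem image_snd_pi {k : ℕ} {s : Set ((Fin k → ℝ) × F)} (hs : IsPolyhedral s) :
    IsPolyhedral (Prod.snd '' s) := by
  induction k with
  | zero =>
    convert hs.preimage (LinearMap.inr ℝ (Fin 0 → ℝ) F) using 1
    ext y
    refine ⟨?_, fun hy => ⟨_, hy, rfl⟩⟩
    rintro ⟨⟨v, y⟩, hv, rfl⟩
    rwa [Subsingleton.elim v 0] at hv
  | succ k ih =>
    let e : (ℝ × (Fin k → ℝ) × F) ≃ₗ[ℝ] (Fin (k + 1) → ℝ) × F :=
      (LinearEquiv.prodAssoc ℝ ℝ (Fin k → ℝ) F).symm ≪≫ₗ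
        (Fin.consLinearEquiv ℝ fun _ => ℝ).prodCongr (LinearEquiv.refl ℝ F)
    have hsnd : Prod.snd '' s = Prod.snd '' (Prod.snd '' (e ⁻¹' s)) := by
      rw [← e.image_symm_eq_preimage, Set.image_image, Set.image_image]
      rfl
    rw [hsnd]
    exact ih (hs.preimage e.toLinearMap).image_snd_real

theorem image_snd [FiniteDimensional ℝ E] {s : Set (E × F)} (hs : IsPolyhedral s) :
    IsPolyhedral (Prod.snd '' s) := by
  let e := ((Module.finBasis ℝ E).equivFun.prodCongr (LinearEquiv.refl ℝ F)).symm
  have hsnd : Prod.snd '' s = Prod.snd '' (e ⁻¹' s) := by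
    rw [← e.image_symm_eq_preimage, Set.image_image]
    rfl
  rw [hsnd]
  exact (hs.preimage e.toLinearMap).image_snd_pi

theorem image [FiniteDimensional ℝ E] [FiniteDimensional ℝ F] {s : Set E} (hs : IsPolyhedral s)
    (L : E →ₗ[ℝ] F) : IsPolyhedral (L '' s) := by
  have hgraph : L '' s = Prod.snd '' (LinearMap.fst ℝ E F ⁻¹' s ∩
      (L ∘ₗ LinearMap.fst ℝ E F - LinearMap.snd ℝ E F) ⁻¹' {0}) := by
    ext y
    simp [sub_eq_zero]
  rw [hgraph]
  exact ((hs.preimage _).inter (singleton_zero.preimage _)).image_snd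

end IsPolyhedral

namespace IsGPC

variable {E : Type*} [AddCommGroup E] [Module ℝ E] [TopologicalSpace E]

theorem setOf_mem_and_forall_le {ι : Type*} [Finite ι] (f : ι → E →L[ℝ] ℝ) (α : ι → ℝ)
    (L : AffineSubspace ℝ E) (hL : IsClosed (L : Set E)) :
    IsGPC {x | x ∈ L ∧ ∀ i, f i x ≤ α i} := by
  obtain ⟨n, ⟨e⟩⟩ := Finite.exists_equiv_fin ι
  refine ⟨n, fun k => f (e.symm k), fun k => α (e.symm k), L, hL, ?_⟩
  ext x
  simp only [Set.mem_ofPred_eq, e.symm.surjective.forall]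

theorem preimage_affine [ContinuousAdd E] {X : Type*} [AddCommGroup X] [Module ℝ X]
    [TopologicalSpace X] {D : Set E} (hD : IsGPC D) (T : X →L[ℝ] E) (e : E) :
    IsGPC ((fun x => T x + e) ⁻¹' D) := by
  obtain ⟨n, f, α, L, hL, rfl⟩ := hD
  let a : X →ᵃ[ℝ] E := (T : X →ₗ[ℝ] E).toAffineMap + AffineMap.const ℝ X e
  refine ⟨n, fun i => (f i).comp T, fun i => α i - f i e, L.comap a,
    hL.preimage (T.continuous.add continuous_const), ?_⟩
  ext x
  simp [a, le_sub_iff_add_le]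

end IsGPC

theorem IsPolyhedral.isGPC_image {E F : Type*} [AddCommGroup E] [Module ℝ E] [TopologicalSpace E]
    [IsTopologicalAddGroup E] [ContinuousSMul ℝ E] [LocallyConvexSpace ℝ E] [T2Space E]
    [AddCommGroup F] [Module ℝ F] [FiniteDimensional ℝ F] {s : Set F} (hs : IsPolyhedral s)
    (L : F →ₗ[ℝ] E) : IsGPC (L '' s) := by
  obtain ⟨ι, _, g, b, hg⟩ := hs.image L.rangeRestrict
  have hext : ∀ k, ∃ φ : E →L[ℝ] ℝ, ∀ v : L.range, φ v = g k v := fun k =>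
    StrongDual.exists_extension _ ⟨g k, (g k).continuous_of_finiteDimensional⟩
  choose φ hφ using hext
  convert IsGPC.setOf_mem_and_forall_le φ b L.range.toAffineSubspace
    (Submodule.closed_of_finiteDimensional _) using 1
  ext x
  simp only [Submodule.mem_toAffineSubspace, Set.mem_ofPred_eq]
  constructor
  · rintro ⟨y, hy, rfl⟩
    refine ⟨LinearMap.mem_range_self L y, fun k => ?_⟩
    rw [hφ k ⟨L y, _⟩]
    exact (hg ▸ Set.mem_image_of_mem L.rangeRestrict hy) k
  · rintro ⟨hx, hle⟩
    have hmem : (⟨x, hx⟩ : L.range) ∈ L.rangeRestrict '' s := by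
      rw [hg]
      intro k
      rw [← hφ]
      exact hle k
    obtain ⟨y, hy, hyx⟩ := hmem
    exact ⟨y, hy, congrArg Subtype.val hyx⟩

theorem isGPC_setOf_exists_eq_and_le {Y Z ι : Type*} [Fintype ι]
    [AddCommGroup Y] [Module ℝ Y] [TopologicalSpace Y]
    [AddCommGroup Z] [Module ℝ Z] [TopologicalSpace Z] [IsTopologicalAddGroup Z]
    [ContinuousSMul ℝ Z] [LocallyConvexSpace ℝ Z]
    (A : Y →L[ℝ] Z) (ys : ι → Y →L[ℝ] ℝ)
    (hA : IsClosed (A '' LinearMap.ker (ContinuousLinearMap.pi ys : Y →ₗ[ℝ] ι → ℝ))) :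
    IsGPC {p : Z × (ι → ℝ) | ∃ y, A y = p.1 ∧ ∀ i, ys i y ≤ p.2 i} := by
  set Ψ : Y →ₗ[ℝ] ι → ℝ := (ContinuousLinearMap.pi ys).toLinearMap
  set K := LinearMap.ker Ψ
  set Z₀ := K.map (A : Y →ₗ[ℝ] Z)
  -- as an instance, this makes `Z ⧸ Z₀` Hausdorff
  have : IsClosed (Z₀ : Set Z) := by simpa [Z₀, Submodule.map_coe] using hA
  have : FiniteDimensional ℝ (Y ⧸ K) := Ψ.finiteDimensional_quotient_ker
  let Aq : Y ⧸ K →ₗ[ℝ] Z ⧸ Z₀ := K.mapQ Z₀ A (Submodule.le_comap_map _ _)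
  let Ψq : Y ⧸ K →ₗ[ℝ] ι → ℝ := K.liftQ Ψ le_rfl
  have hP : IsPolyhedral {p : (Y ⧸ K) × (ι → ℝ) | ∀ i, Ψq p.1 i ≤ p.2 i} := by
    convert (IsPolyhedral.setOf_forall_le (fun i : ι => LinearMap.proj (R := ℝ) i) 0).preimage
      (Ψq ∘ₗ LinearMap.fst ℝ _ _ - LinearMap.snd ℝ _ _) using 1
    ext p
    simp
  convert (hP.isGPC_image (Aq.prodMap LinearMap.id)).preimage_affine
    (Z₀.mkQL.prodMap (ContinuousLinearMap.id ℝ (ι → ℝ))) 0 using 1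
  ext ⟨w, t⟩
  simp only [Set.mem_ofPred_eq, Set.mem_preimage, add_zero, Set.mem_image, Prod.exists]
  constructor
  · rintro ⟨y, rfl, hy⟩
    exact ⟨K.mkQ y, t, hy, rfl⟩
  · rintro ⟨q, t', hle, heq⟩
    obtain ⟨y, rfl⟩ := K.mkQ_surjective q
    obtain ⟨hAy, rfl⟩ : Submodule.Quotient.mk (A y) = Submodule.Quotient.mk w ∧ t' = t :=
      Prod.ext_iff.1 heq
    obtain ⟨k, hk, hAk : A k = A y - w⟩ := (Submodule.Quotient.eq Z₀).1 hAy
    have hys : ∀ i, ys i (y - k) = ys i y := fun i => by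
      rw [map_sub, show ys i k = 0 from congrFun (LinearMap.mem_ker.1 hk) i, sub_zero]
    exact ⟨y - k, by rw [map_sub, hAk, sub_sub_cancel], fun i => hys i ▸ hle i⟩

theorem dom_is_gpc_general
    {X Y Z : Type*}
    [AddCommGroup X] [Module ℝ X] [TopologicalSpace X]
    [AddCommGroup Y] [Module ℝ Y] [TopologicalSpace Y]
    [AddCommGroup Z] [Module ℝ Z] [TopologicalSpace Z] [IsTopologicalAddGroup Z]
    [ContinuousSMul ℝ Z] [LocallyConvexSpace ℝ Z]
    (A₁ : X →L[ℝ] Z) (A₂ : Y →L[ℝ] Z) (z : Z)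
    {m : ℕ} (xs : Fin m → X →L[ℝ] ℝ) (ys : Fin m → Y →L[ℝ] ℝ) (β : Fin m → ℝ)
    (hA₂ : ∀ Y₀ : Submodule ℝ Y, IsClosed (Y₀ : Set Y) →
      FiniteDimensional ℝ (Y ⧸ Y₀) → IsClosed (A₂ '' (Y₀ : Set Y))) :
    IsGPC {x : X | ∃ y : Y, A₁ x + A₂ y = z ∧ ∀ i, xs i x + ys i y ≤ β i} := by
  have hrange := isGPC_setOf_exists_eq_and_le A₂ ys <| hA₂ _
    (ContinuousLinearMap.pi ys).isClosed_ker (LinearMap.finiteDimensional_quotient_ker _)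
  convert hrange.preimage_affine (-(A₁.prod (ContinuousLinearMap.pi xs))) (z, β) using 1
  ext x
  simp [neg_add_eq_sub, eq_sub_iff_add_eq', le_sub_iff_add_le']

/-- If the graph of `F` is
`{(x,y) : A₁ x + A₂ y = z, ⟨xᵢ*,x⟩ + ⟨yᵢ*,y⟩ ≤ βᵢ}` and `A₂` maps every closed
finite-codimensional subspace of `Y` onto a closed set, then `dom F` is a
generalized polyhedral convex set. -/
theorem dom_is_gpc
    {X Y Z : Type*}
    [AddCommGroup X] [Module ℝ X] [TopologicalSpace X] [IsTopologicalAddGroup X]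
    [ContinuousSMul ℝ X] [LocallyConvexSpace ℝ X] [T2Space X]
    [AddCommGroup Y] [Module ℝ Y] [TopologicalSpace Y] [IsTopologicalAddGroup Y]
    [ContinuousSMul ℝ Y] [LocallyConvexSpace ℝ Y] [T2Space Y]
    [AddCommGroup Z] [Module ℝ Z] [TopologicalSpace Z] [IsTopologicalAddGroup Z]
    [ContinuousSMul ℝ Z] [LocallyConvexSpace ℝ Z] [T2Space Z]
    (A₁ : X →L[ℝ] Z) (A₂ : Y →L[ℝ] Z) (z : Z)
    {m : ℕ} (xs : Fin m → X →L[ℝ] ℝ) (ys : Fin m → Y →L[ℝ] ℝ) (β : Fin m → ℝ)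
    (hA₂ : ∀ Y₀ : Submodule ℝ Y, IsClosed (Y₀ : Set Y) →
      FiniteDimensional ℝ (Y ⧸ Y₀) → IsClosed (A₂ '' (Y₀ : Set Y))) :
    IsGPC {x : X | ∃ y : Y, A₁ x + A₂ y = z ∧ ∀ i, xs i x + ys i y ≤ β i} :=
  dom_is_gpc_general A₁ A₂ z xs ys β hA₂
end

section
/- Let X, Y be locally convex Hausdorff topological vector spaces, F : X ⇒ Y a polyhedral convex multifunction, and C ⊆ X a generalized polyhedral convex set. Then F(C) = ⋃_{x ∈ C} F(x) is a polyhedral convex set in Y. -/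
/-- A set is polyhedral convex if it is a finite intersection of half-spaces
given by continuous linear functionals. -/
def IsPolyhedralConvex {E : Type*} [AddCommGroup E] [Module ℝ E] [TopologicalSpace E]
    (D : Set E) : Prop :=
  ∃ (n : ℕ) (f : Fin n → E →L[ℝ] ℝ) (α : Fin n → ℝ),
    D = {x | ∀ i, f i x ≤ α i}

/-!
Only finitely many linear functionals of `x` enter the description of `F(C)`: the half-space
constraints of `C` and the `X`-parts of the constraints of `gph F`. Collecting them in a
linear map `Φ : X → ℝᵐ × ℝⁿ`, the set `F(C)` is the projection onto `Y` of a polyhedral subset of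
`Y × ℝᵐ × ℝⁿ`, since the affine subspace `Φ(L)` of `ℝᵐ × ℝⁿ` is cut out by finitely many linear
equations. Fourier–Motzkin elimination of the real coordinates, one at a time, keeps the set
polyhedral.
-/

open Set

theorem exists_forall_le_and_forall_le_iff {α ι κ : Type*} [LinearOrder α] [Nonempty α]
    [Finite ι] [Finite κ] (l : ι → α) (u : κ → α) :
    (∃ t, (∀ i, l i ≤ t) ∧ ∀ k, t ≤ u k) ↔ ∀ i k, l i ≤ u k := by
  refine ⟨fun ⟨t, hl, hu⟩ i k => (hl i).trans (hu k), fun h => ?_⟩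
  rcases isEmpty_or_nonempty ι with hι | hι
  · rcases isEmpty_or_nonempty κ with hκ | hκ
    · exact ⟨Classical.arbitrary α, isEmptyElim, isEmptyElim⟩
    · obtain ⟨k₀, hk₀⟩ := Finite.exists_min u
      exact ⟨u k₀, isEmptyElim, hk₀⟩
  · obtain ⟨i₀, hi₀⟩ := Finite.exists_max l
    exact ⟨l i₀, hi₀, h i₀⟩

theorem exists_forall_add_mul_le_iff {ι : Type*} [Finite ι] (a c b : ι → ℝ) :
    (∃ t, ∀ i, a i + c i * t ≤ b i) ↔ (∀ i, c i = 0 → a i ≤ b i) ∧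
      ∀ i, c i < 0 → ∀ j, 0 < c j → (b i - a i) / c i ≤ (b j - a j) / c j := by
  have bound : ∀ i t, a i + c i * t ≤ b i ↔ (c i = 0 → a i ≤ b i) ∧
      (c i < 0 → (b i - a i) / c i ≤ t) ∧ (0 < c i → t ≤ (b i - a i) / c i) := by
    intro i t
    rcases lt_trichotomy (c i) 0 with hc | hc | hc
    · simp [hc, hc.ne, hc.not_gt, div_le_iff_of_neg hc]
      constructor <;> intro <;> linarith
    · simp [hc]
    · simp [hc, hc.ne', hc.not_gt, le_div_iff₀ hc]
      constructor <;> intro <;> linarith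
  calc (∃ t, ∀ i, a i + c i * t ≤ b i)
      ↔ (∀ i, c i = 0 → a i ≤ b i) ∧ ∃ t, (∀ i : {i // c i < 0}, (b i - a i) / c i ≤ t) ∧
          ∀ j : {j // 0 < c j}, t ≤ (b j - a j) / c j := by
        simp only [bound, forall_and, Subtype.forall, exists_and_left]
    _ ↔ _ := by
        rw [exists_forall_le_and_forall_le_iff]
        simp only [Subtype.forall]

section Polyhedral

variable {E F : Type*} [AddCommGroup E] [Module ℝ E] [TopologicalSpace E]
  [AddCommGroup F] [Module ℝ F] [TopologicalSpace F]

theorem isPolyhedralConvex_setOf_forall_le {ι : Type*} [Finite ι] (f : ι → E →L[ℝ] ℝ)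
    (α : ι → ℝ) : IsPolyhedralConvex {x : E | ∀ i, f i x ≤ α i} := by
  let e := Finite.equivFin ι
  refine ⟨Nat.card ι, fun k => f (e.symm k), fun k => α (e.symm k), ?_⟩
  ext x
  exact ⟨fun h k => h _, fun h i => by simpa using h (e i)⟩

theorem isPolyhedralConvex_empty : IsPolyhedralConvex (∅ : Set E) :=
  ⟨1, 0, fun _ => -1, by ext; simp⟩

theorem IsPolyhedralConvex.inter {D D' : Set E} (hD : IsPolyhedralConvex D)
    (hD' : IsPolyhedralConvex D') : IsPolyhedralConvex (D ∩ D') := by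
  obtain ⟨n, f, α, rfl⟩ := hD
  obtain ⟨n', f', α', rfl⟩ := hD'
  convert isPolyhedralConvex_setOf_forall_le (Sum.elim f f') (Sum.elim α α') using 1
  ext x
  simp [Sum.forall]

theorem IsPolyhedralConvex.preimage {D : Set F} (hD : IsPolyhedralConvex D) (T : E →L[ℝ] F) :
    IsPolyhedralConvex (T ⁻¹' D) := by
  obtain ⟨n, f, α, rfl⟩ := hD
  exact ⟨n, fun i => f i ∘L T, α, rfl⟩

theorem isPolyhedralConvex_setOf_forall_eq {ι : Type*} [Finite ι] (f : ι → E →L[ℝ] ℝ)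
    (α : ι → ℝ) : IsPolyhedralConvex {x : E | ∀ i, f i x = α i} := by
  convert (isPolyhedralConvex_setOf_forall_le f α).inter
    (isPolyhedralConvex_setOf_forall_le (-f) (-α)) using 1
  ext x
  simp [le_antisymm_iff, forall_and]

theorem IsPolyhedralConvex.image_fst_prod_real {P : Set (E × ℝ)} (hP : IsPolyhedralConvex P) :
    IsPolyhedralConvex (Prod.fst '' P) := by
  obtain ⟨n, f, α, rfl⟩ := hP
  let g : Fin n → E →L[ℝ] ℝ := fun i => f i ∘L ContinuousLinearMap.inl ℝ E ℝ
  let c : Fin n → ℝ := fun i => f i (0, 1)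
  have hf : ∀ i x t, f i (x, t) = g i x + c i * t := fun i x t => by
    have : (x, t) = (x, 0) + t • ((0 : E), (1 : ℝ)) := by simp
    rw [this, map_add, map_smul, smul_eq_mul, mul_comm]
    rfl
  -- row `i` with `c i < 0` bounds `t` below by `(α i - g i x) / c i`, row `j` with `c j > 0`
  -- bounds it above by `(α j - g j x) / c j`
  have : Prod.fst '' {z | ∀ i, f i z ≤ α i} =
      {x | ∀ i : {i // c i = 0}, g i x ≤ α i} ∩
      {x | ∀ p : {i // c i < 0} × {j // 0 < c j},
        ((c p.2)⁻¹ • g p.2 - (c p.1)⁻¹ • g p.1) x ≤ (c p.2)⁻¹ * α p.2 - (c p.1)⁻¹ * α p.1} := by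
    ext x
    simp only [mem_image, Prod.exists, exists_and_right, exists_eq_right, mem_ofPred_eq, hf,
      exists_forall_add_mul_le_iff, mem_inter_iff, Subtype.forall, Prod.forall]
    refine and_congr_right' (forall₄_congr fun i _ j _ => ?_)
    simp only [sub_apply, smul_apply, smul_eq_mul, div_eq_inv_mul, mul_sub]
    constructor <;> intro <;> linarith
  rw [this]
  exact (isPolyhedralConvex_setOf_forall_le _ _).inter (isPolyhedralConvex_setOf_forall_le _ _)

theorem IsPolyhedralConvex.image_fst_prod_fin {m : ℕ} {P : Set (E × (Fin m → ℝ))}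
    (hP : IsPolyhedralConvex P) : IsPolyhedralConvex (Prod.fst '' P) := by
  induction m generalizing E with
  | zero =>
    have : Prod.fst '' P = ContinuousLinearMap.inl ℝ E (Fin 0 → ℝ) ⁻¹' P := by
      ext x
      simp only [mem_image, Prod.exists, exists_eq_right, mem_preimage,
        ContinuousLinearMap.inl_apply, Unique.exists_iff]
      exact iff_of_eq (congrArg (fun v => (x, v) ∈ P) (Subsingleton.elim _ _))
    rw [this]
    exact hP.preimage _
  | succ m ih =>
    let ψ : (E × ℝ) × (Fin m → ℝ) →L[ℝ] E × (Fin (m + 1) → ℝ) :=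
      (ContinuousLinearMap.fst ℝ E ℝ ∘L ContinuousLinearMap.fst ℝ _ _).prod
        ((ContinuousLinearMap.snd ℝ E ℝ ∘L ContinuousLinearMap.fst ℝ _ _).finCons
          (ContinuousLinearMap.snd ℝ _ _))
    have : Prod.fst '' P = Prod.fst '' (Prod.fst '' (ψ ⁻¹' P)) := by
      ext x
      simp only [mem_image, Prod.exists, exists_and_right, exists_eq_right, mem_preimage,
        Fin.exists_fin_succ_pi]
      rfl
    rw [this]
    exact (ih (hP.preimage ψ)).image_fst_prod_real

theorem IsPolyhedralConvex.image_fst [FiniteDimensional ℝ F] [T2Space F] [IsTopologicalAddGroup F]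
    [ContinuousSMul ℝ F] {P : Set (E × F)} (hP : IsPolyhedralConvex P) :
    IsPolyhedralConvex (Prod.fst '' P) := by
  let e : (Fin (Module.finrank ℝ F) → ℝ) ≃L[ℝ] F :=
    (Module.finBasis ℝ F).equivFun.symm.toContinuousLinearEquiv
  have : Prod.fst '' P =
      Prod.fst '' ((ContinuousLinearMap.id ℝ E).prodMap e.toContinuousLinearMap ⁻¹' P) := by
    ext x
    simp [e.surjective.exists]
  rw [this]
  exact (hP.preimage _).image_fst_prod_fin

theorem AffineSubspace.isPolyhedralConvex [FiniteDimensional ℝ F] [T2Space F]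
    [IsTopologicalAddGroup F] [ContinuousSMul ℝ F] (T : AffineSubspace ℝ F) :
    IsPolyhedralConvex (T : Set F) := by
  rcases (T : Set F).eq_empty_or_nonempty with hT | ⟨a, ha⟩
  · rw [hT]
    exact isPolyhedralConvex_empty
  let B := Module.finBasis ℝ (F ⧸ T.direction)
  let ℓ : Fin _ → F →L[ℝ] ℝ := fun k => ((B.coord k).comp T.direction.mkQ).toContinuousLinearMap
  convert isPolyhedralConvex_setOf_forall_eq ℓ (fun k => ℓ k a) using 1
  ext v
  rw [SetLike.mem_coe, ← AffineSubspace.vsub_right_mem_direction_iff_mem ha,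
    ← Submodule.Quotient.mk_eq_zero, ← B.forall_coord_eq_zero_iff]
  simp [ℓ, sub_eq_zero]

theorem IsPolyhedralConvex.setOf_exists_mem_affineSubspace {X : Type*} [AddCommGroup X]
    [Module ℝ X] [FiniteDimensional ℝ F] [T2Space F] [IsTopologicalAddGroup F]
    [ContinuousSMul ℝ F] {D : Set (E × F)} (hD : IsPolyhedralConvex D) (L : AffineSubspace ℝ X)
    (Φ : X →ₗ[ℝ] F) : IsPolyhedralConvex {y | ∃ x ∈ L, (y, Φ x) ∈ D} := by
  have : {y | ∃ x ∈ L, (y, Φ x) ∈ D} =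
      Prod.fst '' (Prod.snd ⁻¹' (L.map Φ.toAffineMap) ∩ D) := by
    ext y
    simp
  rw [this]
  exact (((L.map _).isPolyhedralConvex.preimage (ContinuousLinearMap.snd ℝ E F)).inter hD).image_fst

end Polyhedral

theorem image_of_gpc_under_polyhedral_multifunction_general
    {X Y : Type*}
    [AddCommGroup X] [Module ℝ X] [TopologicalSpace X]
    [AddCommGroup Y] [Module ℝ Y] [TopologicalSpace Y]
    (G : Set (X × Y)) (hG : IsPolyhedralConvex G)
    (C : Set X) (hC : IsGPC C) :
    IsPolyhedralConvex {y : Y | ∃ x ∈ C, (x, y) ∈ G} := by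
  obtain ⟨n, f, α, rfl⟩ := hG
  obtain ⟨m, h, β, L, -, rfl⟩ := hC
  let Φ : X →ₗ[ℝ] (Fin m → ℝ) × (Fin n → ℝ) :=
    (LinearMap.pi fun j => (h j : X →ₗ[ℝ] ℝ)).prod
      (LinearMap.pi fun i => (f i ∘L ContinuousLinearMap.inl ℝ X Y : X →ₗ[ℝ] ℝ))
  let D : Set (Y × (Fin m → ℝ) × (Fin n → ℝ)) :=
    {z | ∀ j, z.2.1 j ≤ β j} ∩ {z | ∀ i, f i (0, z.1) + z.2.2 i ≤ α i}
  have hD : IsPolyhedralConvex D := by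
    let π₁ := ContinuousLinearMap.fst ℝ (Fin m → ℝ) (Fin n → ℝ)
    let π₂ := ContinuousLinearMap.snd ℝ (Fin m → ℝ) (Fin n → ℝ)
    let ρ := ContinuousLinearMap.snd ℝ Y ((Fin m → ℝ) × (Fin n → ℝ))
    exact (isPolyhedralConvex_setOf_forall_le (fun j => .proj j ∘L π₁ ∘L ρ) β).inter
      (isPolyhedralConvex_setOf_forall_le (fun i => f i ∘L .inr ℝ X Y ∘L .fst ℝ _ _ +
        .proj i ∘L π₂ ∘L ρ) α)
  convert hD.setOf_exists_mem_affineSubspace L Φ using 1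
  have hf : ∀ i x y, f i (0, y) + f i (x, 0) = f i (x, y) := fun i x y => by
    rw [← map_add, Prod.mk_add_mk, add_zero, zero_add]
  ext y
  simp [D, Φ, hf, and_assoc]

/-- The image of a generalized polyhedral convex set under a
polyhedral convex multifunction is polyhedral convex. -/
theorem image_of_gpc_under_polyhedral_multifunction
    {X Y : Type*}
    [AddCommGroup X] [Module ℝ X] [TopologicalSpace X] [IsTopologicalAddGroup X]
    [ContinuousSMul ℝ X] [LocallyConvexSpace ℝ X] [T2Space X]
    [AddCommGroup Y] [Module ℝ Y] [TopologicalSpace Y] [IsTopologicalAddGroup Y]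
    [ContinuousSMul ℝ Y] [LocallyConvexSpace ℝ Y] [T2Space Y]
    (G : Set (X × Y)) (hG : IsPolyhedralConvex G)
    (C : Set X) (hC : IsGPC C) :
    IsPolyhedralConvex {y : Y | ∃ x ∈ C, (x, y) ∈ G} :=
  image_of_gpc_under_polyhedral_multifunction_general G hG C hC
end

section
/- Let X and Y be Fréchet spaces and T : X → Y a continuous linear map. Then T maps every finite-codimensional closed linear subspace of X to a closed subset of Y if and only if T(X) is closed in Y. -/
/-!
If `T(X)` is closed it is itself a Fréchet space, so by the open mapping theorem `T : X → T(X)`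
is a quotient map. A subspace `W ⊇ ker T` is saturated for it, hence `T(W)` is closed as soon as
`W` is. For a closed subspace `X₀` of finite codimension, `T(X₀) = T(X₀ + ker T)`, and
`X₀ + ker T` is closed because it contains `X₀` with finite codimension. Conversely, `X₀ = X`.

The open mapping theorem is proved in two steps: Baire's theorem shows that `T` is almost open
(`closure (T '' U)` is a neighbourhood of `0`), and in a complete first countable group successive
approximation upgrades this to openness.
-/

open Filter Set Topology
open scoped Pointwise Uniformity

theorem tendsto_of_mem_closure_image {X Y : Type*} [TopologicalSpace X] [TopologicalSpace Y]
    [RegularSpace Y] {f : X → Y} {x : X} (hf : ContinuousAt f x) {u : ℕ → Set X}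
    (hu : (𝓝 x).HasAntitoneBasis u) {z : ℕ → Y} (hz : ∀ n, z n ∈ closure (f '' u n)) :
    Tendsto z atTop (𝓝 (f x)) := by
  refine (closed_nhds_basis (f x)).tendsto_right_iff.2 fun W ⟨hW, hWc⟩ => ?_
  filter_upwards [hu.eventually_subset (hf hW)] with n hn
  exact closure_minimal (image_subset_iff.2 hn) hWc (hz n)

theorem sub_mem_of_forall_succ_sub_mem {X : Type*} [AddGroup X] {u : ℕ → Set X}
    (hu : ∀ n, (0 : X) ∈ u n) (hadd : ∀ n, u (n + 1) + u (n + 1) ⊆ u n) {s : ℕ → X}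
    (hs : ∀ n, s (n + 1) - s n ∈ u (n + 1)) (k n : ℕ) : s (n + k) - s n ∈ u n := by
  induction k generalizing n with
  | zero => simpa using hu n
  | succ k ih =>
    have h := hadd n (add_mem_add (ih (n + 1)) (hs n))
    rwa [sub_add_sub_cancel, add_right_comm, add_assoc] at h

theorem cauchySeq_of_sub_mem {X : Type*} [AddGroup X] [UniformSpace X] [IsUniformAddGroup X]
    {u : ℕ → Set X} (hu : (𝓝 (0 : X)).HasAntitoneBasis u) {s : ℕ → X}
    (hs : ∀ k n, s (n + k) - s n ∈ u n) : CauchySeq s := by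
  have hbasis := uniformity_eq_comap_nhds_zero_swapped X ▸ hu.toHasBasis.comap
    fun p : X × X => p.1 - p.2
  refine hbasis.cauchySeq_iff'.2 fun N _ => ⟨N, fun n hn => ?_⟩
  simpa [Nat.add_sub_cancel' hn] using hs (n - N) N

theorem LinearMap.image_sup_ker {R M N : Type*} [Ring R] [AddCommGroup M] [Module R M]
    [AddCommGroup N] [Module R N] (f : M →ₗ[R] N) (p : Submodule R M) :
    f '' (p ⊔ f.ker : Submodule R M) = f '' p := by
  refine subset_antisymm ?_ (image_mono (SetLike.coe_mono le_sup_left))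
  rintro _ ⟨_, hx, rfl⟩
  obtain ⟨a, ha, b, hb, rfl⟩ := Submodule.mem_sup.1 hx
  exact ⟨a, ha, by rw [map_add, LinearMap.mem_ker.1 hb, add_zero]⟩

namespace AddMonoidHom

variable {X Y : Type*} [AddCommGroup X] [UniformSpace X] [IsUniformAddGroup X] [CompleteSpace X]
  [AddCommGroup Y] [TopologicalSpace Y] [IsTopologicalAddGroup Y] [T2Space Y] {f : X →+ Y}

theorem closure_image_subset_image_closure (hf : Continuous f)
    (h : ∀ U ∈ 𝓝 (0 : X), closure (f '' U) ∈ 𝓝 (0 : Y)) {u : ℕ → Set X}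
    (hu : (𝓝 (0 : X)).HasAntitoneBasis u) (hadd : ∀ n, u (n + 1) + u (n + 1) ⊆ u n) :
    closure (f '' u 1) ⊆ f '' closure (u 0) := by
  set C : ℕ → Set Y := fun n => closure (f '' u n)
  -- the membership hypothesis sits under the `∃` so that `choose` gives a plain function
  have step : ∀ n z, ∃ x, z ∈ C (n + 1) → x ∈ u (n + 1) ∧ z - f x ∈ C (n + 2) := by
    intro n z
    by_cases hz : z ∈ C (n + 1)
    · obtain ⟨_, ⟨x, hx, rfl⟩, hxz⟩ :=
        mem_closure_iff_nhds_zero.1 hz _ (neg_mem_nhds_zero Y (h _ (hu.mem (n + 2))))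
      exact ⟨x, fun _ => ⟨hx, by simpa using hxz⟩⟩
    · exact ⟨0, fun h => absurd h hz⟩
  choose next hnext using step
  intro y hy
  let s : ℕ → X := fun n => Nat.rec 0 (fun n sn => sn + next n (y - f sn)) n
  have hs : ∀ n, y - f (s n) ∈ C (n + 1) := by
    intro n
    induction n with
    | zero => simpa [s] using hy
    | succ n ih => simpa [s, sub_add_eq_sub_sub] using (hnext n _ ih).2
  have hdiff : ∀ n, s (n + 1) - s n ∈ u (n + 1) := fun n => by
    simpa [s] using (hnext n _ (hs n)).1
  have htele := sub_mem_of_forall_succ_sub_mem (fun n => mem_of_mem_nhds (hu.mem n)) hadd hdiff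
  obtain ⟨x, hx⟩ := cauchySeq_tendsto_of_complete (cauchySeq_of_sub_mem hu htele)
  refine ⟨x, mem_closure_of_tendsto hx (Eventually.of_forall fun n => ?_), ?_⟩
  · simpa [s] using htele n 0
  · have herr : Tendsto (fun n => y - f (s n)) atTop (𝓝 0) := by
      simpa using tendsto_of_mem_closure_image (hf.continuousAt (x := 0))
        (hu.comp_mono (fun _ _ h => by omega) (tendsto_add_atTop_nat 1)) hs
    exact tendsto_nhds_unique ((hf.tendsto x).comp hx)
      (by simpa [Function.comp_def] using herr.const_sub y)

theorem isOpenMap_of_closure_image_mem_nhds [FirstCountableTopology X] (hf : Continuous f)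
    (h : ∀ U ∈ 𝓝 (0 : X), closure (f '' U) ∈ 𝓝 (0 : Y)) : IsOpenMap f := by
  refine IsTopologicalAddGroup.isOpenMap_iff_nhds_zero.2 (le_map_iff.2 fun U hU => ?_)
  obtain ⟨W, ⟨hW, hWc⟩, hWU⟩ := (closed_nhds_basis (0 : X)).mem_iff.1 hU
  obtain ⟨u, hu, hadd⟩ := IsTopologicalAddGroup.exists_antitone_basis_nhds_zero X
  obtain ⟨m, -, hm⟩ := hu.toHasBasis.mem_iff.1 hW
  have hshift : (𝓝 (0 : X)).HasAntitoneBasis fun n => u (m + n) :=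
    hu.comp_mono (fun _ _ h => by omega)
      (tendsto_atTop_mono (fun n => Nat.le_add_left n m) tendsto_id)
  refine mem_of_superset (h _ (hshift.mem 1)) fun y hy => ?_
  obtain ⟨x, hx, rfl⟩ :=
    f.closure_image_subset_image_closure hf h hshift (fun n => hadd (m + n)) hy
  exact ⟨x, hWU (hWc.closure_subset_iff.2 hm hx), rfl⟩

end AddMonoidHom

namespace ContinuousLinearMap

variable {𝕜 : Type*} [NontriviallyNormedField 𝕜]

theorem closure_image_mem_nhds_zero {X Y : Type*}
    [AddCommGroup X] [Module 𝕜 X] [TopologicalSpace X] [IsTopologicalAddGroup X]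
    [ContinuousSMul 𝕜 X]
    [AddCommGroup Y] [Module 𝕜 Y] [TopologicalSpace Y] [IsTopologicalAddGroup Y]
    [ContinuousSMul 𝕜 Y] [BaireSpace Y]
    (T : X →L[𝕜] Y) (hT : Function.Surjective T) {U : Set X} (hU : U ∈ 𝓝 0) :
    closure (T '' U) ∈ 𝓝 0 := by
  obtain ⟨V, hV, -, hVneg, hVU⟩ := exists_closed_nhds_zero_neg_eq_add_subset hU
  set C := closure (T '' V)
  obtain ⟨c, hc⟩ := NormedField.exists_one_lt_norm 𝕜
  have hc0 : c ≠ 0 := norm_pos_iff.1 (one_pos.trans hc)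
  have hcover : ⋃ n : ℕ, c ^ n • C = univ := by
    refine eq_univ_of_forall fun y => ?_
    obtain ⟨x, rfl⟩ := hT y
    obtain ⟨r, hr⟩ := absorbs_iff_norm.1 (absorbent_nhds_zero (𝕜 := 𝕜) hV x)
    obtain ⟨n, hn⟩ := pow_unbounded_of_one_lt r hc
    obtain ⟨v, hv, rfl⟩ := hr (c ^ n) (by rw [norm_pow]; exact hn.le) (mem_singleton x)
    rw [map_smul]
    exact mem_iUnion.2 ⟨n, smul_mem_smul_set (subset_closure ⟨v, hv, rfl⟩)⟩
  obtain ⟨n, hn⟩ := nonempty_interior_of_iUnion_of_closed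
    (fun n => isClosed_closure.smul_of_ne_zero (pow_ne_zero n hc0)) hcover
  obtain ⟨z, hz⟩ : (interior C).Nonempty := by
    rw [interior_smul₀ (pow_ne_zero n hc0)] at hn
    exact smul_set_nonempty.1 hn
  have hCC : C - C ⊆ closure (T '' U) := by
    rintro _ ⟨a, ha, b, hb, rfl⟩
    refine map_mem_closure₂ continuous_sub ha hb ?_
    rintro _ ⟨v, hv, rfl⟩ _ ⟨w, hw, rfl⟩
    have hw' : -w ∈ V := hVneg ▸ Set.neg_mem_neg.2 hw
    exact ⟨v - w, hVU (sub_eq_add_neg v w ▸ Set.add_mem_add hv hw'), map_sub T v w⟩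
  have hzz : (0 : Y) ∈ interior C - C := ⟨z, hz, z, interior_subset hz, sub_self z⟩
  exact mem_of_superset (isOpen_interior.sub_right.mem_nhds hzz)
    ((sub_subset_sub_right interior_subset).trans hCC)

theorem isOpenMap_of_surjective_of_baireSpace {X Y : Type*}
    [AddCommGroup X] [Module 𝕜 X] [UniformSpace X] [IsUniformAddGroup X] [ContinuousSMul 𝕜 X]
    [FirstCountableTopology X] [CompleteSpace X]
    [AddCommGroup Y] [Module 𝕜 Y] [TopologicalSpace Y] [IsTopologicalAddGroup Y]
    [ContinuousSMul 𝕜 Y] [BaireSpace Y] [T2Space Y]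
    (T : X →L[𝕜] Y) (hT : Function.Surjective T) : IsOpenMap T :=
  (T : X →+ Y).isOpenMap_of_closure_image_mem_nhds T.continuous
    fun _ => T.closure_image_mem_nhds_zero hT

theorem isClosed_image_of_isClosed_range {X Y : Type*}
    [AddCommGroup X] [Module 𝕜 X] [UniformSpace X] [IsUniformAddGroup X] [ContinuousSMul 𝕜 X]
    [FirstCountableTopology X] [CompleteSpace X]
    [AddCommGroup Y] [Module 𝕜 Y] [UniformSpace Y] [IsUniformAddGroup Y] [ContinuousSMul 𝕜 Y]
    [FirstCountableTopology Y] [CompleteSpace Y] [T2Space Y]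
    (T : X →L[𝕜] Y) (hT : IsClosed (range T)) {W : Submodule 𝕜 X}
    (hW : IsClosed (W : Set X)) (hker : (T : X →ₗ[𝕜] Y).ker ≤ W) : IsClosed (T '' W) := by
  set R := (T : X →ₗ[𝕜] Y).range
  have hR : IsClosed (R : Set Y) := by rwa [LinearMap.coe_range]
  have : CompleteSpace R := hR.completeSpace_coe
  have : (𝓤 Y).IsCountablyGenerated := IsUniformAddGroup.uniformity_countably_generated
  have : (𝓤 R).IsCountablyGenerated := comap.isCountablyGenerated _ _
  have hsurj := LinearMap.surjective_rangeRestrict (T : X →ₗ[𝕜] Y)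
  have hquot : IsQuotientMap T.rangeRestrict :=
    (T.rangeRestrict.isOpenMap_of_surjective_of_baireSpace hsurj).isQuotientMap
      T.rangeRestrict.continuous hsurj
  have hsat : T.rangeRestrict ⁻¹' (T.rangeRestrict '' W) = W := by
    have h := Submodule.comap_map_eq (T.rangeRestrict : X →ₗ[𝕜] R) W
    rw [toLinearMap_rangeRestrict, LinearMap.ker_rangeRestrict, sup_eq_left.2 hker] at h
    exact congrArg SetLike.coe h
  have hclosed : IsClosed (T.rangeRestrict '' W) := by
    rw [← hquot.isClosed_preimage, hsat]
    exact hW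
  rw [show T '' W = Subtype.val '' (T.rangeRestrict '' W) from
    (image_image Subtype.val T.rangeRestrict _).symm]
  exact hR.isClosedEmbedding_subtypeVal.isClosedMap _ hclosed

end ContinuousLinearMap

theorem closed_under_finite_codim_iff_closed_range_general
    {X Y : Type*}
    [AddCommGroup X] [Module ℝ X] [UniformSpace X] [IsUniformAddGroup X]
    [ContinuousSMul ℝ X] [CompleteSpace X]
    [FirstCountableTopology X]
    [AddCommGroup Y] [Module ℝ Y] [UniformSpace Y] [IsUniformAddGroup Y]
    [ContinuousSMul ℝ Y] [T2Space Y] [CompleteSpace Y]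
    [FirstCountableTopology Y]
    (T : X →L[ℝ] Y) :
    (∀ X₀ : Submodule ℝ X, IsClosed (X₀ : Set X) →
        FiniteDimensional ℝ (X ⧸ X₀) → IsClosed (T '' (X₀ : Set X)))
      ↔ IsClosed (Set.range T) := by
  refine ⟨fun h => by simpa using h ⊤ isClosed_univ inferInstance, fun hT X₀ hX₀ _ => ?_⟩
  have himage : T '' X₀ = T '' (X₀ ⊔ (T : X →ₗ[ℝ] Y).ker : Submodule ℝ X) :=
    ((T : X →ₗ[ℝ] Y).image_sup_ker X₀).symm
  rw [himage]
  exact T.isClosed_image_of_isClosed_range hT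
    (Submodule.isClosed_mono_of_finiteDimensional_quotient hX₀ le_sup_left) le_sup_right

/-- For a continuous linear map `T` between Fréchet spaces,
`T` maps every closed finite-codimensional subspace to a closed set iff the
range of `T` is closed. -/
theorem closed_under_finite_codim_iff_closed_range
    {X Y : Type*}
    [AddCommGroup X] [Module ℝ X] [UniformSpace X] [IsUniformAddGroup X]
    [ContinuousSMul ℝ X] [LocallyConvexSpace ℝ X] [T2Space X] [CompleteSpace X]
    [FirstCountableTopology X]
    [AddCommGroup Y] [Module ℝ Y] [UniformSpace Y] [IsUniformAddGroup Y]
    [ContinuousSMul ℝ Y] [LocallyConvexSpace ℝ Y] [T2Space Y] [CompleteSpace Y]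
    [FirstCountableTopology Y]
    (T : X →L[ℝ] Y) :
    (∀ X₀ : Submodule ℝ X, IsClosed (X₀ : Set X) →
        FiniteDimensional ℝ (X ⧸ X₀) → IsClosed (T '' (X₀ : Set X)))
      ↔ IsClosed (Set.range T) :=
  closed_under_finite_codim_iff_closed_range_general T
end

section
/- Let X be a locally convex Hausdorff topological vector space and let P = {x ∈ L : ⟨x_i*, x⟩ ≤ α_i, i = 1,…,m} be a nonempty generalized polyhedral convex set, where L is a closed affine subspace. Let I = {i : ∃ x̂ ∈ P with ⟨x_i*, x̂⟩ < α_i}. Then the relative interior of P is nonempty and qri P = iri P = ri P = {x ∈ P : ⟨x_i*, x⟩ < α_i for all i ∈ I}. -/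
/-!
Write `Q` for the right-hand side. The constraints outside `I` hold with equality on `P`, hence on
the closure of its affine span, so inside `cl (aff P)` a neighbourhood of a point of `Q` only has to
respect the finitely many strict constraints: `Q ⊆ ri P`. From a point `a ∈ ri P` one can move a
little beyond `a` away from any `z ∈ P`, so the cone of the convex set `P - a` is symmetric, hence a
subspace: `ri P ⊆ iri P ⊆ qri P`. If `a ∈ qri P` and `f i a = α i`, then `f i ≤ 0` on the subspace
`cl cone (P - a)`, so `f i` vanishes there and `i ∉ I`: `qri P ⊆ Q`. Averaging one witness of strict
inequality for each index of `I` gives a point of `Q`.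
-/

variable {E : Type*} [AddCommGroup E] [Module ℝ E] [TopologicalSpace E]

def coneOf (s : Set E) : Set E := {x | ∃ c : ℝ, 0 ≤ c ∧ ∃ v ∈ s, x = c • v}

def riSet (Ω : Set E) : Set E :=
  {a ∈ Ω | ∃ V ∈ nhds (0 : E),
    {x | ∃ v ∈ V, x = a + v} ∩ closure (affineSpan ℝ Ω : Set E) ⊆ Ω}

/-- The intrinsic relative interior: points `a` for which `cone (Ω - a)` is a
linear subspace. -/
def iriSet (Ω : Set E) : Set E :=
  {a ∈ Ω | ∃ S : Submodule ℝ E, (S : Set E) = coneOf ((fun x => x - a) '' Ω)}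

/-- The quasi-relative interior: points `a` for which `cl (cone (Ω - a))` is a
linear subspace. -/
def qriSet (Ω : Set E) : Set E :=
  {a ∈ Ω | ∃ S : Submodule ℝ E, (S : Set E) = closure (coneOf ((fun x => x - a) '' Ω))}

open Set Filter Topology

section Convexity

variable {V : Type*} [AddCommGroup V] [Module ℝ V] {s : Set V} {x y : V}

theorem coneOf_smul_mem {c : ℝ} (hc : 0 ≤ c) (hx : x ∈ coneOf s) : c • x ∈ coneOf s := by
  obtain ⟨d, hd, u, hu, rfl⟩ := hx
  exact ⟨c * d, mul_nonneg hc hd, u, hu, (mul_smul c d u).symm⟩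

theorem Convex.add_mem_coneOf (hs : Convex ℝ s) (hx : x ∈ coneOf s) (hy : y ∈ coneOf s) :
    x + y ∈ coneOf s := by
  obtain ⟨c, hc, u, hu, rfl⟩ := hx
  obtain ⟨d, hd, v, hv, rfl⟩ := hy
  rcases (add_nonneg hc hd).eq_or_lt with hcd | hcd
  · obtain ⟨rfl, rfl⟩ : c = 0 ∧ d = 0 := ⟨by linarith, by linarith⟩
    exact ⟨0, le_rfl, u, hu, by simp⟩
  refine ⟨c + d, hcd.le, (c / (c + d)) • u + (d / (c + d)) • v,
    hs hu hv (div_nonneg hc hcd.le) (div_nonneg hd hcd.le) (by field_simp), ?_⟩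
  simp only [smul_add, smul_smul, mul_div_cancel₀ _ hcd.ne']

theorem Convex.exists_submodule_coe_eq_coneOf (hs : Convex ℝ s) (hne : s.Nonempty)
    (hneg : ∀ x ∈ s, -x ∈ coneOf s) : ∃ S : Submodule ℝ V, (S : Set V) = coneOf s := by
  have neg_mem : ∀ x ∈ coneOf s, -x ∈ coneOf s := by
    rintro _ ⟨c, hc, u, hu, rfl⟩
    simpa using coneOf_smul_mem hc (hneg u hu)
  obtain ⟨u, hu⟩ := hne
  refine ⟨{ carrier := coneOf s
            add_mem' := hs.add_mem_coneOf
            zero_mem' := ⟨0, le_rfl, u, hu, (zero_smul ℝ u).symm⟩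
            smul_mem' := fun c x hx => ?_ }, rfl⟩
  rcases le_total 0 c with hc | hc
  · exact coneOf_smul_mem hc hx
  · simpa using coneOf_smul_mem (neg_nonneg.2 hc) (neg_mem x hx)

theorem Convex.exists_forall_lt_of_forall_le {ι : Type*} [Fintype ι] (hs : Convex ℝ s)
    (hne : s.Nonempty) {g : ι → V → ℝ} (hg : ∀ i, ConvexOn ℝ s (g i)) {c : ι → ℝ}
    (hle : ∀ i, ∀ x ∈ s, g i x ≤ c i) :
    ∃ x ∈ s, ∀ i, (∃ y ∈ s, g i y < c i) → g i x < c i := by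
  classical
  obtain ⟨x₀, hx₀⟩ := hne
  cases isEmpty_or_nonempty ι with
  | inl _ => exact ⟨x₀, hx₀, isEmptyElim⟩
  | inr _ =>
  let w : ι → V := fun j => if h : ∃ y ∈ s, g j y < c j then h.choose else x₀
  have hw : ∀ j, w j ∈ s := fun j => by
    unfold w; split_ifs with h
    exacts [h.choose_spec.1, hx₀]
  have hwlt : ∀ j, (∃ y ∈ s, g j y < c j) → g j (w j) < c j := fun j h => by
    simpa only [w, dif_pos h] using h.choose_spec.2
  have hn : 0 < (Fintype.card ι : ℝ)⁻¹ := by positivity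
  have hsum : ∑ _ : ι, (Fintype.card ι : ℝ)⁻¹ = 1 := by simp
  refine ⟨∑ j, (Fintype.card ι : ℝ)⁻¹ • w j, hs.sum_mem (fun _ _ => hn.le) hsum fun j _ => hw j,
    fun i hi => ?_⟩
  calc g i (∑ j, (Fintype.card ι : ℝ)⁻¹ • w j)
      ≤ ∑ j, (Fintype.card ι : ℝ)⁻¹ • g i (w j) :=
        (hg i).map_sum_le (fun _ _ => hn.le) hsum fun j _ => hw j
    _ < ∑ _ : ι, (Fintype.card ι : ℝ)⁻¹ • c i :=
        Finset.sum_lt_sum (fun j _ => smul_le_smul_of_nonneg_left (hle i _ (hw j)) hn.le)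
          ⟨i, Finset.mem_univ i, smul_lt_smul_of_pos_left (hwlt i hi) hn⟩
    _ = c i := by rw [← Finset.sum_smul, hsum, one_smul]

end Convexity

section Interiors

variable {Ω : Set E} {a z : E}

theorem exists_pos_add_smul_sub_mem_of_mem_riSet [ContinuousSMul ℝ E] (ha : a ∈ riSet Ω)
    (hz : z ∈ Ω) : ∃ t : ℝ, 0 < t ∧ a + t • (a - z) ∈ Ω := by
  obtain ⟨haΩ, V, hV, hsub⟩ := ha
  have hsmul : Tendsto (fun t : ℝ => t • (a - z)) (𝓝 0) (𝓝 0) :=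
    (continuous_id.smul continuous_const).tendsto' 0 0 (zero_smul ℝ _)
  obtain ⟨t, htV, ht⟩ :=
    (((hsmul.eventually_mem hV).filter_mono nhdsWithin_le_nhds).and
      (self_mem_nhdsWithin (s := Ioi (0 : ℝ)))).exists
  refine ⟨t, ht, hsub ⟨⟨_, htV, rfl⟩, subset_closure ?_⟩⟩
  have := (affineSpan ℝ Ω).smul_vsub_vadd_mem t (mem_affineSpan ℝ haΩ) (mem_affineSpan ℝ hz)
    (mem_affineSpan ℝ haΩ)
  simpa [vsub_eq_sub, vadd_eq_add, add_comm] using this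

theorem riSet_subset_iriSet [ContinuousSMul ℝ E] (hΩ : Convex ℝ Ω) : riSet Ω ⊆ iriSet Ω := by
  intro a ha
  refine ⟨ha.1, Convex.exists_submodule_coe_eq_coneOf ?_ ⟨0, a, ha.1, sub_self a⟩ ?_⟩
  · simpa [sub_eq_add_neg, add_comm] using hΩ.translate (-a)
  · rintro _ ⟨z, hz, rfl⟩
    obtain ⟨t, ht, hmem⟩ := exists_pos_add_smul_sub_mem_of_mem_riSet ha hz
    refine ⟨t⁻¹, inv_nonneg.2 ht.le, _, ⟨_, hmem, rfl⟩, ?_⟩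
    simp [smul_smul, ht.ne']

theorem iriSet_subset_qriSet [ContinuousAdd E] [ContinuousConstSMul ℝ E] :
    iriSet Ω ⊆ qriSet Ω := fun _ ⟨ha, S, hS⟩ =>
  ⟨ha, S.topologicalClosure, by rw [Submodule.topologicalClosure_coe, hS]⟩

theorem ContinuousLinearMap.eq_of_mem_qriSet_of_forall_le (g : E →L[ℝ] ℝ) (ha : a ∈ qriSet Ω)
    (hmax : ∀ x ∈ Ω, g x ≤ g a) (hz : z ∈ Ω) : g z = g a := by
  obtain ⟨-, S, hS⟩ := ha
  have hcone : coneOf ((fun x => x - a) '' Ω) ⊆ g ⁻¹' Iic 0 := by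
    rintro _ ⟨c, hc, _, ⟨x, hx, rfl⟩, rfl⟩
    simpa using mul_nonpos_of_nonneg_of_nonpos hc (sub_nonpos.2 (hmax x hx))
  have hza : z - a ∈ S := by
    rw [← SetLike.mem_coe, hS]
    exact subset_closure ⟨1, zero_le_one, z - a, ⟨z, hz, rfl⟩, (one_smul ℝ _).symm⟩
  have : g (-(z - a)) ≤ 0 := by
    refine closure_minimal hcone (isClosed_Iic.preimage g.continuous) ?_
    rw [← hS]
    exact S.neg_mem hza
  simp only [map_neg, map_sub, neg_nonpos, sub_nonneg] at this
  exact le_antisymm (hmax z hz) this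

theorem ContinuousLinearMap.mapsTo_closure_affineSpan_singleton {F : Type*} [AddCommGroup F]
    [Module ℝ F] [TopologicalSpace F] [T1Space F] (g : E →L[ℝ] F) {c : F}
    (h : MapsTo g Ω {c}) : MapsTo g (closure (affineSpan ℝ Ω : Set E)) {c} := by
  have hspan : (affineSpan ℝ Ω : Set E) ⊆ g ⁻¹' {c} := by
    have : affineSpan ℝ Ω ≤ (affineSpan ℝ {c}).comap (g : E →ₗ[ℝ] F).toAffineMap :=
      affineSpan_le.2 fun x hx => by simpa [AffineSubspace.mem_comap] using h hx
    intro x hx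
    simpa [AffineSubspace.mem_comap] using this hx
  exact closure_minimal hspan (isClosed_singleton.preimage g.continuous)

end Interiors

section Polyhedron

variable {ι : Type*} (L : AffineSubspace ℝ E) (f : ι → E →L[ℝ] ℝ) (α : ι → ℝ)

def genPolyhedron : Set E := {x | x ∈ L ∧ ∀ i, f i x ≤ α i}

def strictPart : Set E :=
  {x ∈ genPolyhedron L f α | ∀ i, (∃ y ∈ genPolyhedron L f α, f i y < α i) → f i x < α i}

theorem convex_genPolyhedron : Convex ℝ (genPolyhedron L f α) :=
  fun _ hx _ hy _ _ ha hb hab => ⟨L.convex hx.1 hy.1 ha hb hab, fun i =>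
    convex_halfSpace_le (f i).toLinearMap.isLinear (α i) (hx.2 i) (hy.2 i) ha hb hab⟩

theorem strictPart_nonempty [Fintype ι] (hne : (genPolyhedron L f α).Nonempty) :
    (strictPart L f α).Nonempty :=
  have hP := convex_genPolyhedron L f α
  let ⟨x, hx, hlt⟩ := hP.exists_forall_lt_of_forall_le hne
    (fun i => (f i).toLinearMap.convexOn hP) fun i _ hx => hx.2 i
  ⟨x, hx, hlt⟩

theorem qriSet_genPolyhedron_subset : qriSet (genPolyhedron L f α) ⊆ strictPart L f α := by
  intro a ha
  refine ⟨ha.1, fun i ⟨z, hz, hlt⟩ => lt_of_le_of_ne (ha.1.2 i) fun hai => ?_⟩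
  have := (f i).eq_of_mem_qriSet_of_forall_le ha (fun x hx => hai ▸ hx.2 i) hz
  linarith

theorem strictPart_subset_riSet [Finite ι] (hL : IsClosed (L : Set E)) :
    strictPart L f α ⊆ riSet (genPolyhedron L f α) := by
  rintro a ⟨haP, ha⟩
  refine ⟨haP, {v | ∀ i, (∃ y ∈ genPolyhedron L f α, f i y < α i) → f i v < α i - f i a},
    eventually_all.2 fun i => ?_, ?_⟩
  · by_cases hi : ∃ y ∈ genPolyhedron L f α, f i y < α i
    · exact (((f i).continuous.tendsto' 0 0 (map_zero _)).eventually
        (gt_mem_nhds (sub_pos.2 (ha i hi)))).mono fun _ h _ => h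
    · exact Eventually.of_forall fun _ h => absurd h hi
  · rintro _ ⟨⟨v, hv, rfl⟩, hx⟩
    refine ⟨closure_minimal (affineSpan_le.2 fun y hy => hy.1) hL hx, fun i => ?_⟩
    by_cases hi : ∃ y ∈ genPolyhedron L f α, f i y < α i
    · have := hv i hi
      rw [map_add]
      linarith
    · exact le_of_eq <| (f i).mapsTo_closure_affineSpan_singleton
        (fun y hy => (hy.2 i).antisymm (not_lt.1 fun h => hi ⟨y, hy, h⟩)) hx

end Polyhedron

theorem relative_interiors_of_gpc_general
    {X : Type*} [AddCommGroup X] [Module ℝ X] [TopologicalSpace X]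
    [IsTopologicalAddGroup X] [ContinuousSMul ℝ X]
    {m : ℕ} (f : Fin m → X →L[ℝ] ℝ) (α : Fin m → ℝ)
    (L : AffineSubspace ℝ X) (hL : IsClosed (L : Set X))
    (P : Set X) (hP : P = {x | x ∈ L ∧ ∀ i, f i x ≤ α i})
    (hne : P.Nonempty) :
    (riSet P).Nonempty ∧
    qriSet P = riSet P ∧
    iriSet P = riSet P ∧
    riSet P = {x ∈ P | ∀ i, (∃ xh ∈ P, f i xh < α i) → f i x < α i} := by
  change P = genPolyhedron L f α at hP
  subst hP
  have ri_sub_iri := riSet_subset_iriSet (convex_genPolyhedron L f α)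
  have iri_sub_qri := iriSet_subset_qriSet (Ω := genPolyhedron L f α)
  have qri_sub := qriSet_genPolyhedron_subset L f α
  have sub_ri := strictPart_subset_riSet L f α hL
  have hri : riSet (genPolyhedron L f α) = strictPart L f α :=
    ((ri_sub_iri.trans iri_sub_qri).trans qri_sub).antisymm sub_ri
  exact ⟨(strictPart_nonempty L f α hne).mono sub_ri,
    (qri_sub.trans sub_ri).antisymm (ri_sub_iri.trans iri_sub_qri),
    ((iri_sub_qri.trans qri_sub).trans sub_ri).antisymm ri_sub_iri, hri⟩

/-- For a nonempty generalized polyhedral convex set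
`P = {x ∈ L : ⟨xᵢ*, x⟩ ≤ αᵢ}`, the relative interior of `P` is nonempty and
`qri P = iri P = ri P = {x ∈ P : ⟨xᵢ*, x⟩ < αᵢ for all i ∈ I}`, where
`I = {i : ∃ xh ∈ P, ⟨xᵢ*, xh⟩ < αᵢ}`. -/
theorem relative_interiors_of_gpc
    {X : Type*} [AddCommGroup X] [Module ℝ X] [TopologicalSpace X]
    [IsTopologicalAddGroup X] [ContinuousSMul ℝ X] [LocallyConvexSpace ℝ X] [T2Space X]
    {m : ℕ} (f : Fin m → X →L[ℝ] ℝ) (α : Fin m → ℝ)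
    (L : AffineSubspace ℝ X) (hL : IsClosed (L : Set X))
    (P : Set X) (hP : P = {x | x ∈ L ∧ ∀ i, f i x ≤ α i})
    (hne : P.Nonempty) :
    (riSet P).Nonempty ∧
    qriSet P = riSet P ∧
    iriSet P = riSet P ∧
    riSet P = {x ∈ P | ∀ i, (∃ xh ∈ P, f i xh < α i) → f i x < α i} :=
  relative_interiors_of_gpc_general f α L hL P hP hne
end
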